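/- Let w ∈ Σ* have normal form x̄ · shuffle(y, ȳ) · z with x, y, z ∈ A*. Then the queue state x is the (unique) shortest queue transformed by w without error: x.w ≠ ⊥, and for every q ∈ A* with q.w ≠ ⊥, the word x is a prefix of q. -/
import Mathlib


/-- A basic queue action: write a letter or read a letter. -/
inductive Act (A : Type) : Type
  | wr (a : A)
  | rd (a : A)
deriving DecidableEq

variable {A : Type} [DecidableEq A]

/-- The action of words over `Act A` on queue states `A* ∪ {⊥}` (⊥ = `none`). -/
def act : Option (List A) → List (Act A) → Option (List A)
  | q, [] => q
  | none, _ :: _ => none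
  | some q, (Act.wr a) :: u => act (some (q ++ [a])) u
  | some q, (Act.rd a) :: u =>
    match q with
    | [] => none
    | b :: q' => if b = a then act (some q') u else none

/-- Two words over `Act A` are equivalent if they act identically on all queues. -/
def qequiv (u v : List (Act A)) : Prop := ∀ q : List A, act (some q) u = act (some q) v

/-- Writing the word `w`. -/
def W (w : List A) : List (Act A) := w.map Act.wr

/-- Reading the word `w` (the barred copy of `w`). -/
def R (w : List A) : List (Act A) := w.map Act.rd

/-- `shuffle s` is the word `s₁ s̄₁ s₂ s̄₂ … sₖ s̄ₖ`. -/
def shuffle (s : List A) : List (Act A) := s.flatMap fun a => [Act.wr a, Act.rd a]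

/-- The projection to write letters. -/
def prW (w : List (Act A)) : List A :=
  w.filterMap fun x => match x with | Act.wr a => some a | Act.rd _ => none

/-- The projection to read letters (with the bars removed). -/
def prR (w : List (Act A)) : List A :=
  w.filterMap fun x => match x with | Act.wr _ => none | Act.rd a => some a

theorem act_append (u v : List (Act A)) : ∀ q, act q (u ++ v) = act (act q u) v := by
  induction u with
  | nil =>
      intro q
      cases q <;> rfl
  | cons x u ih =>
      intro q
      cases q with
      | none =>
          simp only [List.cons_append, act]
          cases v with
          | nil => rfl
          | cons _ _ => rfl
      | some q =>
          cases x with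
          | wr a => simpa [act] using ih _
          | rd a =>
              cases q with
              | nil =>
                  simp only [List.cons_append, act]
                  cases v with
                  | nil => rfl
                  | cons _ _ => rfl
              | cons b q' =>
                  by_cases h : b = a
                  · simp [List.cons_append, act, h, ih]
                  · simp only [List.cons_append, act, if_neg h]
                    cases v with
                    | nil => rfl
                    | cons _ _ => rfl

/-- The setoid of queue-action equivalence. -/
def qsetoid (A : Type) [DecidableEq A] : Setoid (List (Act A)) :=
  ⟨qequiv, ⟨fun _ _ => rfl, fun h q => (h q).symm, fun h1 h2 q => (h1 q).trans (h2 q)⟩⟩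

/-- The monoid of queue actions. -/
def QAct (A : Type) [DecidableEq A] : Type := Quotient (qsetoid A)

theorem act_none : ∀ v : List (Act A), act (none : Option (List A)) v = none
  | [] => rfl
  | _ :: _ => rfl

theorem qequiv_append {u u' v v' : List (Act A)} (hu : qequiv u u') (hv : qequiv v v') :
    qequiv (u ++ v) (u' ++ v') := by
  intro q
  rw [act_append, act_append, hu q]
  cases h : act (some q) u' with
  | none => rw [act_none, act_none]
  | some q' => exact hv q'

instance : Monoid (QAct A) where
  mul := Quotient.map₂ (· ++ ·) (fun _ _ hu _ _ hv => qequiv_append hu hv)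
  one := Quotient.mk (qsetoid A) []
  mul_assoc := by
    rintro ⟨u⟩ ⟨v⟩ ⟨w⟩
    exact congrArg (Quotient.mk (qsetoid A)) (List.append_assoc u v w)
  one_mul := by
    rintro ⟨u⟩
    rfl
  mul_one := by
    rintro ⟨u⟩
    exact congrArg (Quotient.mk (qsetoid A)) (List.append_nil u)

/-- The class of a word in the monoid of queue actions. -/
def cls (w : List (Act A)) : QAct A := Quotient.mk (qsetoid A) w

theorem cls_mul (u v : List (Act A)) : cls u * cls v = cls (u ++ v) := rfl

theorem act_R_prefix : ∀ (x r : List A), act (some (x ++ r)) (R x) = some r := by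
  intro x
  induction x with
  | nil => intro r; rfl
  | cons a x ih =>
      intro r
      simp only [R, List.map_cons, List.cons_append, act, if_pos rfl]
      exact ih r

theorem act_W : ∀ (z q : List A), act (some q) (W z) = some (q ++ z) := by
  intro z
  induction z with
  | nil => intro q; simp [W, act]
  | cons a z ih =>
      intro q
      simp only [W, List.map_cons, act]
      rw [show List.map Act.wr z = W z from rfl, ih]
      simp

theorem act_shuffle_nil : ∀ y : List A, act (some ([] : List A)) (shuffle y) = some [] := by
  intro y
  induction y with
  | nil => rfl
  | cons a y ih =>
      simp only [shuffle, List.flatMap_cons, List.cons_append, act, List.nil_append,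
        if_pos rfl]
      exact ih

theorem act_R_ne_none : ∀ (x q : List A), act (some q) (R x) ≠ none → x <+: q := by
  intro x
  induction x with
  | nil => intro q _; exact List.nil_prefix
  | cons a x ih =>
      intro q h
      cases q with
      | nil => exact absurd rfl h
      | cons b q' =>
          simp only [R, List.map_cons, act] at h
          by_cases hb : b = a
          · rw [if_pos hb] at h
            subst hb
            exact List.prefix_cons_inj b |>.mpr (ih q' h)
          · rw [if_neg hb] at h
            exact absurd rfl h

/-- If `w` has normal form `x̄ · shuffle(y,ȳ) · z`, then `x` is the shortest queue
transformed by `w` without error: `x.w ≠ ⊥`, and any `q` with `q.w ≠ ⊥` has `x` as a prefix. -/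
theorem stmt12 [Fintype A] [Nontrivial A] (w : List (Act A)) (x y z : List A)
    (hnf : qequiv w (R x ++ shuffle y ++ W z)) :
    act (some x) w ≠ none ∧ ∀ q : List A, act (some q) w ≠ none → x <+: q := by
  constructor
  · rw [hnf x, act_append, act_append]
    have hx : act (some x) (R x) = some [] := by
      simpa using act_R_prefix x []
    rw [hx, act_shuffle_nil, act_W]
    simp
  · intro q hq
    rw [hnf q, act_append, act_append] at hq
    apply act_R_ne_none x q
    intro h
    rw [h, act_none, act_none] at hq
    exact hq rfl
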